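/- Let h : ℝⁿ → ℝ² be a real analytic germ at the origin and r ≥ 2 a natural number. Define H : ℝⁿ × ℂ → ℝ² (identifying ℝ² with ℂ) by H(x, z) = h(x) + zʳ. Then H has an isolated singularity at the origin (i.e., the derivative of H has rank 2 at every point of a punctured neighborhood of 0) if and only if h has an isolated singularity at the origin. -/

import Mathlib

/-!
The derivative of `H(x, z) = h(x) + z ^ r` at `(x, z)` is `(u, w) ↦ Dh(x) u + r z ^ (r - 1) w`.
Off the slice `z = 0` the second summand alone is already onto `ℂ`; on that slice it vanishes
because `r ≥ 2`, so there `DH(x, 0)` is onto exactly when `Dh(x)` is. Hence the singular points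
of `H` are the points `(x, 0)` with `x` singular for `h`.
-/

/-- A C¹ map germ has an isolated singularity at the origin: it vanishes at `0`
and its total derivative is surjective (rank 2 onto `ℝ² ≅ ℂ`) at every point of a
punctured neighbourhood of `0`. -/
def HasIsolatedSingularity {E : Type*} [NormedAddCommGroup E] [NormedSpace ℝ E]
    (g : E → ℂ) : Prop :=
  g 0 = 0 ∧ ∃ U ∈ nhds (0 : E), ∀ x ∈ U, x ≠ 0 → Function.Surjective (fderiv ℝ g x)

open Filter Topology

theorem eventually_nhdsNE_prod_iff {X Y : Type*} [TopologicalSpace X] [TopologicalSpace Y]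
    {P : X → Prop} (a : X) (b : Y) :
    (∀ᶠ p in 𝓝[≠] (a, b), p.2 ≠ b ∨ P p.1) ↔ ∀ᶠ x in 𝓝[≠] a, P x := by
  constructor
  · intro hP
    have hslice : Tendsto (fun x => (x, b)) (𝓝[≠] a) (𝓝[≠] (a, b)) :=
      tendsto_nhdsWithin_of_tendsto_nhds_of_eventually_within _
        ((Continuous.prodMk_left b).continuousAt.tendsto.mono_left nhdsWithin_le_nhds)
        (eventually_nhdsWithin_of_forall fun x hx => by simpa using hx)
    simpa using hslice.eventually hP
  · intro hP
    rw [eventually_nhdsWithin_iff] at hP ⊢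
    filter_upwards [continuous_fst.continuousAt.eventually hP] with p hp hne
    by_contra! hcon
    exact hcon.2 (hp fun h1 => hne (Prod.ext h1 hcon.1))

section

variable {E : Type*} [NormedAddCommGroup E] [NormedSpace ℝ E]

theorem hasIsolatedSingularity_iff_eventually (g : E → ℂ) :
    HasIsolatedSingularity g ↔
      g 0 = 0 ∧ ∀ᶠ x in 𝓝[≠] 0, Function.Surjective (fderiv ℝ g x) := by
  rw [HasIsolatedSingularity, eventually_nhdsWithin_iff, eventually_iff_exists_mem]
  rfl

theorem surjective_coprod_smul_id_iff (L : E →L[ℝ] ℂ) (c : ℂ) :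
    Function.Surjective (L.coprod (c • ContinuousLinearMap.id ℝ ℂ)) ↔
      c ≠ 0 ∨ Function.Surjective L := by
  rcases eq_or_ne c 0 with rfl | hc
  · simp only [ne_eq, not_true_eq_false, false_or]
    refine ⟨fun hs y => ?_, fun hs y => ?_⟩
    · obtain ⟨p, hp⟩ := hs y
      exact ⟨p.1, by simpa using hp⟩
    · obtain ⟨u, hu⟩ := hs y
      exact ⟨(u, 0), by simpa using hu⟩
  · simp only [ne_eq, hc, not_false_eq_true, true_or, iff_true]
    exact fun y => ⟨(0, c⁻¹ * y), by simp [hc]⟩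

theorem hasFDerivAt_add_pow {h : E → ℂ} {h' : E →L[ℝ] ℂ} {x : E} (hh : HasFDerivAt h h' x)
    (r : ℕ) (z : ℂ) :
    HasFDerivAt (fun p : E × ℂ => h p.1 + p.2 ^ r)
      (h'.coprod (((r : ℂ) * z ^ (r - 1)) • ContinuousLinearMap.id ℝ ℂ)) (x, z) := by
  have hpow := ((hasDerivAt_pow r z).hasFDerivAt.restrictScalars ℝ).comp (x, z)
    (hasFDerivAt_snd (𝕜 := ℝ) (p := (x, z)))
  refine ((hh.comp (x, z) hasFDerivAt_fst).add hpow).congr_fderiv ?_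
  ext <;> simp [mul_comm]

theorem surjective_fderiv_add_pow_iff {h : E → ℂ} {r : ℕ} (hr : 2 ≤ r) {p : E × ℂ}
    (hh : DifferentiableAt ℝ h p.1) :
    Function.Surjective (fderiv ℝ (fun p : E × ℂ => h p.1 + p.2 ^ r) p) ↔
      p.2 ≠ 0 ∨ Function.Surjective (fderiv ℝ h p.1) := by
  obtain ⟨x, z⟩ := p
  have hcoeff : (r : ℂ) * z ^ (r - 1) ≠ 0 ↔ z ≠ 0 := by
    rw [mul_ne_zero_iff, pow_ne_zero_iff (by omega), Nat.cast_ne_zero]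
    exact and_iff_right (by omega)
  rw [(hasFDerivAt_add_pow hh.hasFDerivAt r z).fderiv, surjective_coprod_smul_id_iff, hcoeff]

end

theorem suspension_isolated_singularity_iff {n : ℕ} (h : (Fin n → ℝ) → ℂ)
    (hh : ContDiff ℝ 1 h) (r : ℕ) (hr : 2 ≤ r) :
    HasIsolatedSingularity (fun p : (Fin n → ℝ) × ℂ => h p.1 + p.2 ^ r) ↔
      HasIsolatedSingularity h := by
  rw [hasIsolatedSingularity_iff_eventually, hasIsolatedSingularity_iff_eventually]
  refine and_congr (by simp [zero_pow (by omega : r ≠ 0)]) ?_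
  simp_rw [surjective_fderiv_add_pow_iff hr (hh.differentiable one_ne_zero _)]
  exact eventually_nhdsNE_prod_iff (P := fun x => Function.Surjective (fderiv ℝ h x)) 0 0
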